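/- Let σ be a positive definite density matrix on ℂⁿ and let E be the quantum erasure channel E(X) = Tr(X)·σ on n×n complex matrices (which is completely positive and trace-preserving, with adjoint E†(Y) = Tr(σY)·I). Then for every density matrix γ and every density matrix ω, the Petz recovery map satisfies P_{E,γ}(ω) = γ; in particular, for any target density ρ, choosing γ = ρ solves the quantum prior hacking problem P_{E,γ}(ω) = ρ. -/

import Mathlib

open Matrix BigOperators
open scoped ComplexOrder Classical

/-- Positive-semidefinite matrix square root (0 if the matrix is not psd). -/
noncomputable def msqrt {n : ℕ} (A : Matrix (Fin n) (Fin n) ℂ) : Matrix (Fin n) (Fin n) ℂ :=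
  if h : A.PosSemidef then
    (h.1.eigenvectorUnitary : Matrix (Fin n) (Fin n) ℂ) *
      diagonal ((↑) ∘ (√·) ∘ h.1.eigenvalues) *
      (star h.1.eigenvectorUnitary : Matrix (Fin n) (Fin n) ℂ)
  else 0

/-- Density matrix: positive semidefinite with trace 1. -/
def IsDensity {n : ℕ} (ρ : Matrix (Fin n) (Fin n) ℂ) : Prop :=
  ρ.PosSemidef ∧ ρ.trace = 1

/-- The quantum erasure channel `E(X) = Tr(X) • σ`. -/
noncomputable def eraseChan {n : ℕ} (σ X : Matrix (Fin n) (Fin n) ℂ) :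
    Matrix (Fin n) (Fin n) ℂ := X.trace • σ

/-- Its Hilbert–Schmidt adjoint `E†(Y) = Tr(σ Y) • I`. -/
noncomputable def eraseChanAdj {n : ℕ} (σ Y : Matrix (Fin n) (Fin n) ℂ) :
    Matrix (Fin n) (Fin n) ℂ := (σ * Y).trace • (1 : Matrix (Fin n) (Fin n) ℂ)

/-! Since `Tr γ = 1`, the erasure channel maps `γ` to `σ`, so the Petz map sandwiches
`σ^{-1/2} ω σ^{-1/2}`. Its pairing with `σ` is `Tr ω = 1` by cyclicity of the trace, hence the
adjoint returns the identity and the recovery map collapses to `√γ · √γ = γ`. -/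

lemma msqrt_mul_self {n : ℕ} {A : Matrix (Fin n) (Fin n) ℂ} (hA : A.PosSemidef) :
    msqrt A * msqrt A = A := by
  have hU (X : Matrix (Fin n) (Fin n) ℂ) :
      (star hA.1.eigenvectorUnitary : Matrix (Fin n) (Fin n) ℂ) *
        ((hA.1.eigenvectorUnitary : Matrix (Fin n) (Fin n) ℂ) * X) = X := by
    rw [← Matrix.mul_assoc, Unitary.coe_star_mul_self, Matrix.one_mul]
  have hD : diagonal ((↑) ∘ (√·) ∘ hA.1.eigenvalues) *
      diagonal ((↑) ∘ (√·) ∘ hA.1.eigenvalues) =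
        diagonal (RCLike.ofReal ∘ hA.1.eigenvalues : Fin n → ℂ) := by
    rw [diagonal_mul_diagonal]
    congr 1 with i
    simp [← Complex.ofReal_mul, Real.mul_self_sqrt (hA.eigenvalues_nonneg i)]
  conv_rhs => rw [hA.1.spectral_theorem, Unitary.conjStarAlgAut_apply, ← hD]
  rw [msqrt, dif_pos hA]
  simp only [Matrix.mul_assoc, hU]

lemma Matrix.PosDef.isUnit_msqrt {n : ℕ} {A : Matrix (Fin n) (Fin n) ℂ} (hA : A.PosDef) :
    IsUnit (msqrt A) :=
  isUnit_of_mul_isUnit_left <| (msqrt_mul_self hA.posSemidef).symm ▸ hA.isUnit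

lemma Matrix.trace_mul_conj_inv_of_mul_self_eq {m R : Type*} [Fintype m] [DecidableEq m]
    [CommRing R] {A S : Matrix m m R} (hS : IsUnit S) (hSA : S * S = A) (N : Matrix m m R) :
    (A * (S⁻¹ * N * S⁻¹)).trace = N.trace := by
  have hS' : IsUnit S.det := (isUnit_iff_isUnit_det S).1 hS
  rw [← hSA, Matrix.mul_assoc, Matrix.mul_assoc, mul_nonsing_inv_cancel_left S (N * S⁻¹) hS',
    ← Matrix.mul_assoc, trace_conj hS]

lemma eraseChan_of_trace_eq_one {n : ℕ} (σ : Matrix (Fin n) (Fin n) ℂ)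
    {X : Matrix (Fin n) (Fin n) ℂ} (hX : X.trace = 1) : eraseChan σ X = σ := by
  rw [eraseChan, hX, one_smul]

lemma eraseChanAdj_conj_inv_msqrt {n : ℕ} {σ : Matrix (Fin n) (Fin n) ℂ} (hσ : σ.PosDef)
    (ω : Matrix (Fin n) (Fin n) ℂ) :
    eraseChanAdj σ ((msqrt σ)⁻¹ * ω * (msqrt σ)⁻¹) = ω.trace • 1 := by
  rw [eraseChanAdj,
    trace_mul_conj_inv_of_mul_self_eq hσ.isUnit_msqrt (msqrt_mul_self hσ.posSemidef)]

theorem quantum_erasure_petz_is_erasure_to_prior_general {n : ℕ}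
    (σ : Matrix (Fin n) (Fin n) ℂ) (hσpd : σ.PosDef) :
    ∀ γ ω : Matrix (Fin n) (Fin n) ℂ, IsDensity γ → IsDensity ω →
      msqrt γ *
        eraseChanAdj σ
          ((msqrt (eraseChan σ γ))⁻¹ * ω * (msqrt (eraseChan σ γ))⁻¹) *
        msqrt γ = γ := by
  intro γ ω hγ hω
  rw [eraseChan_of_trace_eq_one σ hγ.2, eraseChanAdj_conj_inv_msqrt hσpd, hω.2, one_smul,
    Matrix.mul_one, msqrt_mul_self hγ.1]

theorem quantum_erasure_petz_is_erasure_to_prior {n : ℕ}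
    (σ : Matrix (Fin n) (Fin n) ℂ) (hσpd : σ.PosDef) (hσ : IsDensity σ) :
    ∀ γ ω : Matrix (Fin n) (Fin n) ℂ, IsDensity γ → IsDensity ω →
      msqrt γ *
        eraseChanAdj σ
          ((msqrt (eraseChan σ γ))⁻¹ * ω * (msqrt (eraseChan σ γ))⁻¹) *
        msqrt γ = γ :=
  quantum_erasure_petz_is_erasure_to_prior_general σ hσpd
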